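/- Let V_r := (𝔽₂²)^r be equipped with the symplectic form ⟨u,v⟩ := Σ_{j=1}^r (x_j z'_j + z_j x'_j) where u_j = (x_j,z_j), v_j = (x'_j,z'_j). Define the kernel κ : 𝔽₂² × 𝔽₂² → ℝ by κ(0,0) = 1; κ(a,0) = κ(0,b) = 1 for nonzero a,b; κ(a,a) = 3 for nonzero a; κ(a,b) = 0 for distinct nonzero a,b; and set κ_r(u,v) := ∏_{j=1}^r κ(u_j,v_j) and F_r(A) := 4^{−r} Σ_{u,v ∈ A} κ_r(u,v) for A ⊆ V_r. If A ⊆ V_r is an affine subspace of dimension m such that ⟨u,v⟩ = 0 for all u,v ∈ A (an affine isotropic set), then F_r(A) ≤ (3/4)^{r−m} (3/2)^m. Moreover, when r = m = n and A = {0,p₁} × ⋯ × {0,pₙ} with each p_j a nonzero element of 𝔽₂², equality holds: F_n(A) = (3/2)^n. -/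

import Mathlib

open BigOperators

noncomputable section

/-- `V_r = (𝔽₂²)^r`. -/
abbrev V (r : ℕ) := Fin r → (ZMod 2 × ZMod 2)

/-- The symplectic form `⟨u,v⟩ = Σ_j (x_j z'_j + z_j x'_j)` on `V_r`. -/
def symp {r : ℕ} (u v : V r) : ZMod 2 :=
  ∑ j, ((u j).1 * (v j).2 + (u j).2 * (v j).1)

/-- The one-site kernel `κ`: `κ(0,0) = 1`; `κ(a,0) = κ(0,b) = 1`; `κ(a,a) = 3` for
nonzero `a`; `κ(a,b) = 0` for distinct nonzero `a, b`. -/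
def kap (a b : ZMod 2 × ZMod 2) : ℝ :=
  if a = 0 ∨ b = 0 then 1 else if a = b then 3 else 0

/-- The product kernel `κ_r(u,v) = ∏_j κ(u_j, v_j)`. -/
def kapr {r : ℕ} (u v : V r) : ℝ := ∏ j, kap (u j) (v j)

/-- `F_r(A) = 4^{−r} Σ_{u,v ∈ A} κ_r(u,v)`. -/
def Fr (r : ℕ) (A : Set (V r)) : ℝ :=
  (1 / 4 ^ r) * ∑ u ∈ (Set.toFinite A).toFinset, ∑ v ∈ (Set.toFinite A).toFinset, kapr u v

/-!
Slice an isotropic affine set `A ⊆ V_{r+1}` along the first coordinate into fibers `B_a`,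
`a ∈ 𝔽₂²`. Then `Σ_{A×A} κ_{r+1} = Σ_{a,b} κ(a,b) Σ_{B_a×B_b} κ_r`, every fiber and every union
`B_0 ∪ B_e` of two disjoint fibers is again affine and isotropic, two fibers are disjoint or
equal, and `B_0` can meet at most one `B_e` with `e ≠ 0`, because `⟨e,f⟩ = 1` for distinct
nonzero `e, f`. Feeding the inductive bound `Σ_{B×B} κ_r ≤ 3^r |B|` into this decomposition
gives `Σ_{A×A} κ_{r+1} ≤ 3^{r+1} |A|`. An isotropic subspace of the nondegenerate space `V_r`
has dimension `m ≤ r`, so `|A| = 2^m` turns this into the bound on `F_r(A)`. On the product set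
everything factors over coordinates, each factor being `(1 + 1 + 1 + 3) / 4 = 3 / 2`.
-/

open Finset Module

theorem LinearMap.BilinForm.two_mul_finrank_le_of_le_orthogonal {K M : Type*} [Field K]
    [AddCommGroup M] [Module K M] [FiniteDimensional K M] {B : LinearMap.BilinForm K M}
    (hB : B.Nondegenerate) {W : Submodule K M} (hW : W ≤ B.orthogonal W) :
    2 * finrank K W ≤ finrank K M := by
  have := Submodule.finrank_mono hW
  rw [LinearMap.BilinForm.finrank_orthogonal hB] at this
  have := Submodule.finrank_le W
  omega

theorem LinearMap.BilinForm.le_orthogonal_of_image_add_left {R M : Type*} [CommRing R]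
    [AddCommGroup M] [Module R M] {B : LinearMap.BilinForm R M} {K : Submodule R M} {u : M}
    (h : ∀ x ∈ (fun k => u + k) '' (K : Set M), ∀ y ∈ (fun k => u + k) '' (K : Set M),
      B x y = 0) :
    K ≤ B.orthogonal K := by
  intro y hy x hx
  have hB : ∀ a ∈ K, ∀ b ∈ K, B (u + a) (u + b) = 0 := fun a ha b hb =>
    h _ ⟨a, ha, rfl⟩ _ ⟨b, hb, rfl⟩
  have hxy := hB x hx y hy
  have hx0 := hB x hx 0 K.zero_mem
  have h0y := hB 0 K.zero_mem y hy
  have h00 := hB 0 K.zero_mem 0 K.zero_mem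
  simp only [map_add, LinearMap.add_apply, add_zero] at hxy hx0 h0y h00
  show B x y = 0
  linear_combination hxy - hx0 - h0y + h00

theorem ZMod.sum_univ_two {M : Type*} [AddCommMonoid M] (f : ZMod 2 → M) :
    ∑ a, f a = f 0 + f 1 :=
  Fin.sum_univ_two f

/-- A nonempty set closed under `x - y + z` is a coset of an additive subgroup. -/
def AffineClosed {G : Type*} [AddGroup G] (s : Set G) : Prop :=
  ∀ x ∈ s, ∀ y ∈ s, ∀ z ∈ s, x - y + z ∈ s

theorem AddSubgroup.affineClosed {G : Type*} [AddGroup G] (H : AddSubgroup G) :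
    AffineClosed (H : Set G) :=
  fun _ hx _ hy _ hz => H.add_mem (H.sub_mem hx hy) hz

theorem AffineClosed.image_add_left {G : Type*} [AddCommGroup G] {s : Set G}
    (hs : AffineClosed s) (u : G) : AffineClosed ((fun k => u + k) '' s) := by
  rintro _ ⟨a, ha, rfl⟩ _ ⟨b, hb, rfl⟩ _ ⟨c, hc, rfl⟩
  exact ⟨a - b + c, hs a ha b hb c hc, by simp only; abel⟩

theorem affineClosed_singleton {G : Type*} [AddGroup G] (a : G) : AffineClosed ({a} : Set G) := by
  rintro _ rfl _ rfl _ rfl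
  simp

theorem affineClosed_pair (e : ZMod 2 × ZMod 2) :
    AffineClosed (({0, e} : Finset (ZMod 2 × ZMod 2)) : Set (ZMod 2 × ZMod 2)) := by
  simp only [AffineClosed, mem_coe]
  revert e; decide

section Symplectic

variable {r : ℕ}

def IsIsotropic (A : Set (V r)) : Prop := ∀ x ∈ A, ∀ y ∈ A, symp x y = 0

def sympSite (a b : ZMod 2 × ZMod 2) : ZMod 2 := a.1 * b.2 + a.2 * b.1

theorem symp_cons (a b : ZMod 2 × ZMod 2) (x y : V r) :
    symp (Fin.cons a x : V (r + 1)) (Fin.cons b y) = sympSite a b + symp x y := by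
  simp [symp, sympSite, Fin.sum_univ_succ]

theorem sympSite_self (a : ZMod 2 × ZMod 2) : sympSite a a = 0 := by
  rw [sympSite, mul_comm, CharTwo.add_self_eq_zero]

theorem sympSite_eq_zero_of_mem_pair (e : ZMod 2 × ZMod 2) :
    ∀ a ∈ ({0, e} : Finset (ZMod 2 × ZMod 2)), ∀ b ∈ ({0, e} : Finset _), sympSite a b = 0 := by
  revert e; decide

theorem sympSite_ne_zero {e f : ZMod 2 × ZMod 2} (he : e ≠ 0) (hf : f ≠ 0) (hef : e ≠ f) :
    sympSite e f ≠ 0 := by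
  revert e f; decide

theorem symp_self (x : V r) : symp x x = 0 :=
  sum_eq_zero fun j _ => sympSite_self (x j)

theorem symp_comm (u v : V r) : symp u v = symp v u :=
  sum_congr rfl fun _ _ => by ring

variable (r) in
def sympForm : LinearMap.BilinForm (ZMod 2) (V r) :=
  LinearMap.mk₂ (ZMod 2) symp
    (fun _ _ _ => by
      simp only [symp, Pi.add_apply, Prod.fst_add, Prod.snd_add, ← sum_add_distrib]
      exact sum_congr rfl fun _ _ => by ring)
    (fun _ _ _ => by
      simp only [symp, Pi.smul_apply, Prod.smul_fst, Prod.smul_snd, smul_eq_mul, mul_sum]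
      exact sum_congr rfl fun _ _ => by ring)
    (fun _ _ _ => by
      simp only [symp, Pi.add_apply, Prod.fst_add, Prod.snd_add, ← sum_add_distrib]
      exact sum_congr rfl fun _ _ => by ring)
    (fun _ _ _ => by
      simp only [symp, Pi.smul_apply, Prod.smul_fst, Prod.smul_snd, smul_eq_mul, mul_sum]
      exact sum_congr rfl fun _ _ => by ring)

@[simp] theorem sympForm_apply (u v : V r) : sympForm r u v = symp u v := rfl

theorem sympForm_nondegenerate : (sympForm r).Nondegenerate := by
  have hleft : (sympForm r).SeparatingLeft := by
    intro u hu
    ext j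
    · simpa [symp, Pi.single_apply, apply_ite Prod.fst, apply_ite Prod.snd] using
        hu (Pi.single j (0, 1))
    · simpa [symp, Pi.single_apply, apply_ite Prod.fst, apply_ite Prod.snd] using
        hu (Pi.single j (1, 0))
  exact ⟨hleft, fun v hv => hleft v fun u => by rw [sympForm_apply, symp_comm]; exact hv u⟩

theorem finrank_le_of_le_orthogonal {K : Submodule (ZMod 2) (V r)}
    (hK : K ≤ (sympForm r).orthogonal K) : finrank (ZMod 2) K ≤ r := by
  have := LinearMap.BilinForm.two_mul_finrank_le_of_le_orthogonal sympForm_nondegenerate hK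
  simp only [finrank_pi_fintype, finrank_prod, finrank_self, sum_const, card_univ,
    Fintype.card_fin, smul_eq_mul] at this
  omega

end Symplectic

theorem Fin.cons_sub_cons_add_cons {α : Type*} [AddGroup α] {n : ℕ} (a b c : α)
    (x y z : Fin n → α) :
    (Fin.cons a x - Fin.cons b y + Fin.cons c z : Fin (n + 1) → α) =
      Fin.cons (a - b + c) (x - y + z) := by
  ext i
  refine Fin.cases ?_ (fun _ => ?_) i <;> simp

section Fibers

variable {r : ℕ} {A : Finset (V (r + 1))}

def fiber (A : Finset (V (r + 1))) (a : ZMod 2 × ZMod 2) : Finset (V r) :=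
  {z | Fin.cons a z ∈ A}

@[simp] theorem mem_fiber {a : ZMod 2 × ZMod 2} {z : V r} :
    z ∈ fiber A a ↔ Fin.cons a z ∈ A := by
  simp [fiber]

theorem sum_eq_sum_fiber {M : Type*} [AddCommMonoid M] (A : Finset (V (r + 1)))
    (f : V (r + 1) → M) : ∑ x ∈ A, f x = ∑ a, ∑ z ∈ fiber A a, f (Fin.cons a z) := by
  calc ∑ x ∈ A, f x = ∑ x, if x ∈ A then f x else 0 := by rw [sum_ite_mem, univ_inter]
    _ = ∑ p : (ZMod 2 × ZMod 2) × V r, if Fin.cons p.1 p.2 ∈ A then f (Fin.cons p.1 p.2) else 0 :=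
      (Fintype.sum_equiv (Fin.consEquiv fun _ => ZMod 2 × ZMod 2) _ _ fun _ => rfl).symm
    _ = _ := by simp only [Fintype.sum_prod_type, fiber, sum_filter]

theorem card_eq_sum_card_fiber (A : Finset (V (r + 1))) : #A = ∑ a, #(fiber A a) := by
  simpa only [card_eq_sum_ones] using sum_eq_sum_fiber A fun _ => 1

theorem AffineClosed.biUnion_fiber (hA : AffineClosed (A : Set (V (r + 1))))
    {L : Finset (ZMod 2 × ZMod 2)} (hL : AffineClosed (L : Set (ZMod 2 × ZMod 2))) :
    AffineClosed ((L.biUnion (fiber A) : Finset (V r)) : Set (V r)) := by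
  simp only [coe_biUnion, Set.mem_iUnion, mem_coe, mem_fiber, exists_prop, AffineClosed] at *
  rintro x ⟨a, ha, hx⟩ y ⟨b, hb, hy⟩ z ⟨c, hc, hz⟩
  refine ⟨a - b + c, hL a ha b hb c hc, ?_⟩
  simpa [Fin.cons_sub_cons_add_cons] using hA _ hx _ hy _ hz

theorem IsIsotropic.biUnion_fiber (hA : IsIsotropic (A : Set (V (r + 1))))
    {L : Finset (ZMod 2 × ZMod 2)} (hL : ∀ a ∈ L, ∀ b ∈ L, sympSite a b = 0) :
    IsIsotropic ((L.biUnion (fiber A) : Finset (V r)) : Set (V r)) := by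
  simp only [IsIsotropic, coe_biUnion, Set.mem_iUnion, mem_coe, mem_fiber, exists_prop]
    at *
  rintro x ⟨a, ha, hx⟩ y ⟨b, hb, hy⟩
  simpa [symp_cons, hL a ha b hb] using hA _ hx _ hy

theorem fiber_subset_of_mem (hA : AffineClosed (A : Set (V (r + 1))))
    {a b : ZMod 2 × ZMod 2} {z : V r} (hza : z ∈ fiber A a) (hzb : z ∈ fiber A b) :
    fiber A a ⊆ fiber A b := fun w hw => by
  simpa [Fin.cons_sub_cons_add_cons] using
    hA _ (mem_fiber.1 hw) _ (mem_fiber.1 hza) _ (mem_fiber.1 hzb)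

theorem fiber_eq_of_not_disjoint (hA : AffineClosed (A : Set (V (r + 1))))
    {a b : ZMod 2 × ZMod 2} (h : ¬Disjoint (fiber A a) (fiber A b)) : fiber A a = fiber A b := by
  obtain ⟨z, hza, hzb⟩ := not_disjoint_iff.1 h
  exact (fiber_subset_of_mem hA hza hzb).antisymm (fiber_subset_of_mem hA hzb hza)

theorem sympSite_eq_zero_of_not_disjoint (hA : IsIsotropic (A : Set (V (r + 1))))
    {a b : ZMod 2 × ZMod 2} (h : ¬Disjoint (fiber A a) (fiber A b)) : sympSite a b = 0 := by
  obtain ⟨z, hza, hzb⟩ := not_disjoint_iff.1 h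
  simpa [symp_cons, symp_self] using hA _ (mem_fiber.1 hza) _ (mem_fiber.1 hzb)

theorem disjoint_fiber_zero_or (hA : AffineClosed (A : Set (V (r + 1))))
    (hiso : IsIsotropic (A : Set (V (r + 1)))) {e f : ZMod 2 × ZMod 2} (hef : sympSite e f ≠ 0) :
    Disjoint (fiber A 0) (fiber A e) ∨ Disjoint (fiber A 0) (fiber A f) := by
  by_contra! h
  obtain ⟨he, hf⟩ := h
  rw [fiber_eq_of_not_disjoint hA he] at hf
  exact hef (sympSite_eq_zero_of_not_disjoint hiso hf)

end Fibers

section KernelSum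

variable {r : ℕ}

def kapSum (A B : Finset (V r)) : ℝ := ∑ x ∈ A, ∑ y ∈ B, kapr x y

theorem kap_nonneg (a b : ZMod 2 × ZMod 2) : 0 ≤ kap a b := by
  unfold kap; split_ifs <;> norm_num

theorem kap_comm (a b : ZMod 2 × ZMod 2) : kap a b = kap b a := by
  simp only [kap, or_comm (a := a = 0), @eq_comm _ a b]

theorem kapSum_nonneg (A B : Finset (V r)) : 0 ≤ kapSum A B :=
  sum_nonneg fun _ _ => sum_nonneg fun _ _ => prod_nonneg fun _ _ => kap_nonneg _ _

theorem kapSum_comm (A B : Finset (V r)) : kapSum A B = kapSum B A := by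
  rw [kapSum, sum_comm]
  exact sum_congr rfl fun _ _ => sum_congr rfl fun _ _ => prod_congr rfl fun _ _ => kap_comm _ _

theorem kapSum_union_self {A B : Finset (V r)} (h : Disjoint A B) :
    kapSum (A ∪ B) (A ∪ B) = kapSum A A + kapSum B B + 2 * kapSum A B := by
  have hBA := kapSum_comm B A
  simp only [kapSum, sum_union h, sum_add_distrib] at hBA ⊢
  linarith

theorem kapr_cons (a b : ZMod 2 × ZMod 2) (x y : V r) :
    kapr (Fin.cons a x : V (r + 1)) (Fin.cons b y) = kap a b * kapr x y := by
  simp [kapr, Fin.prod_univ_succ]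

theorem kapSum_eq_sum_fiber (A B : Finset (V (r + 1))) :
    kapSum A B = ∑ a, ∑ b, kap a b * kapSum (fiber A a) (fiber B b) := by
  simp only [kapSum, mul_sum]
  rw [sum_eq_sum_fiber]
  refine sum_congr rfl fun a _ => ?_
  simp only [sum_eq_sum_fiber B, kapr_cons]
  rw [sum_comm]

theorem kapSum_piFinset (s t : Fin r → Finset (ZMod 2 × ZMod 2)) :
    kapSum (Fintype.piFinset s) (Fintype.piFinset t) = ∏ j, ∑ a ∈ s j, ∑ b ∈ t j, kap a b := by
  simp only [kapSum, kapr, ← prod_univ_sum]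
  exact (prod_univ_sum s fun j a => ∑ b ∈ t j, kap a b).symm

end KernelSum

/-- In the inductive step `X a b` is the kernel sum over `B_a × B_b` and `w a = |B_a|`; the pair
bound loses `2 X 0 0` only when `B_0 = B_e`, which happens for at most one `e`. -/
theorem sum_kap_mul_le {X : ZMod 2 × ZMod 2 → ZMod 2 × ZMod 2 → ℝ} {w : ZMod 2 × ZMod 2 → ℝ}
    {c : ℝ} (hsymm : ∀ a b, X a b = X b a) (hdiag : ∀ a, X a a ≤ c * w a)
    (hpair : ∀ e ≠ 0, X 0 0 + X e e + 2 * X 0 e ≤ c * (w 0 + w e) + 2 * X 0 0)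
    (hpair_sharp : ∀ e f, e ≠ 0 → f ≠ 0 → e ≠ f →
      X 0 0 + X e e + 2 * X 0 e ≤ c * (w 0 + w e) ∨ X 0 0 + X f f + 2 * X 0 f ≤ c * (w 0 + w f)) :
    ∑ a, ∑ b, kap a b * X a b ≤ 3 * c * ∑ a, w a := by
  have h1 := hpair (0, 1) (by decide)
  have h2 := hpair (1, 0) (by decide)
  have h3 := hpair (1, 1) (by decide)
  have h12 := hpair_sharp (0, 1) (1, 0) (by decide) (by decide) (by decide)
  have h13 := hpair_sharp (0, 1) (1, 1) (by decide) (by decide) (by decide)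
  have h23 := hpair_sharp (1, 0) (1, 1) (by decide) (by decide) (by decide)
  have d1 := hdiag (0, 1)
  have d2 := hdiag (1, 0)
  have d3 := hdiag (1, 1)
  simp only [Fintype.sum_prod_type, ZMod.sum_univ_two]
  norm_num [kap, Prod.ext_iff, Prod.mk_zero_zero, hsymm _ 0]
  rcases h12 with h12 | h12 <;> rcases h13 with h13 | h13 <;> rcases h23 with h23 | h23 <;>
    linarith

theorem kapSum_self_le_card_of_zero (A : Finset (V 0)) : kapSum A A ≤ #A := by
  have hA : #A ≤ 1 := card_le_one_of_subsingleton A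
  have : kapSum A A = #A * #A := by simp [kapSum, kapr]
  rw [this]
  exact mul_le_of_le_one_left (Nat.cast_nonneg _) (by exact_mod_cast hA)

theorem kapSum_self_le_succ {r : ℕ}
    (ih : ∀ B : Finset (V r), AffineClosed (B : Set (V r)) → IsIsotropic (B : Set (V r)) →
      kapSum B B ≤ 3 ^ r * #B)
    {A : Finset (V (r + 1))} (hA : AffineClosed (A : Set (V (r + 1))))
    (hiso : IsIsotropic (A : Set (V (r + 1)))) : kapSum A A ≤ 3 ^ (r + 1) * #A := by
  set B := fiber A
  have hdiag : ∀ a, kapSum (B a) (B a) ≤ 3 ^ r * #(B a) := fun a => by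
    simpa using ih (({a} : Finset _).biUnion B)
      (hA.biUnion_fiber (by simpa using affineClosed_singleton a))
      (hiso.biUnion_fiber (by simpa using sympSite_self a))
  have hpair : ∀ e, Disjoint (B 0) (B e) →
      kapSum (B 0) (B 0) + kapSum (B e) (B e) + 2 * kapSum (B 0) (B e) ≤
        3 ^ r * (#(B 0) + #(B e)) := fun e hd => by
    have := ih (({0, e} : Finset _).biUnion B) (hA.biUnion_fiber (affineClosed_pair e))
      (hiso.biUnion_fiber (sympSite_eq_zero_of_mem_pair e))
    rwa [biUnion_insert, singleton_biUnion, kapSum_union_self hd, card_union_of_disjoint hd,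
      Nat.cast_add] at this
  rw [kapSum_eq_sum_fiber, card_eq_sum_card_fiber, Nat.cast_sum, pow_succ, mul_comm _ (3 : ℝ)]
  refine sum_kap_mul_le (fun a b => kapSum_comm _ _) hdiag
    (fun e he => ?_) (fun e f he hf hef => ?_)
  · by_cases hd : Disjoint (B 0) (B e)
    · linarith [hpair e hd, kapSum_nonneg (B 0) (B 0)]
    · rw [← fiber_eq_of_not_disjoint hA hd]
      linarith [hdiag 0]
  · exact (disjoint_fiber_zero_or hA hiso (sympSite_ne_zero he hf hef)).imp (hpair e) (hpair f)

theorem kapSum_self_le {r : ℕ} (A : Finset (V r)) (hA : AffineClosed (A : Set (V r)))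
    (hiso : IsIsotropic (A : Set (V r))) : kapSum A A ≤ 3 ^ r * #A := by
  induction r with
  | zero => simpa using kapSum_self_le_card_of_zero A
  | succ r ih => exact kapSum_self_le_succ ih hA hiso

theorem Submodule.toFinset_card_image_add_left {F M : Type*} [Field F] [Fintype F]
    [AddCommGroup M] [Module F M] (K : Submodule F M) [Finite K] (u : M)
    (h : ((fun k => u + k) '' (K : Set M)).Finite) :
    #h.toFinset = Fintype.card F ^ finrank F K := by
  have := Fintype.ofFinite K
  rw [← Set.ncard_eq_toFinset_card _ h, Set.ncard_image_of_injective _ (add_right_injective u),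
    ← Nat.card_coe_set_eq, SetLike.coe_sort_coe, Nat.card_eq_fintype_card,
    Module.card_eq_pow_finrank (K := F)]

theorem Fr_le_of_isotropic {r m : ℕ} {K : Submodule (ZMod 2) (V r)} {u : V r} {A : Set (V r)}
    (hm : finrank (ZMod 2) K = m) (hA : A = (fun k => u + k) '' (K : Set (V r)))
    (hiso : IsIsotropic A) : Fr r A ≤ (3 / 4 : ℝ) ^ (r - m) * (3 / 2 : ℝ) ^ m := by
  have hmr : m ≤ r := hm ▸ finrank_le_of_le_orthogonal
    (LinearMap.BilinForm.le_orthogonal_of_image_add_left (hA ▸ hiso))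
  have hcard : #(Set.toFinite A).toFinset = 2 ^ m := by
    subst hA; rw [K.toFinset_card_image_add_left, ZMod.card, hm]
  have hclosed : AffineClosed ((Set.toFinite A).toFinset : Set (V r)) := by
    rw [Set.Finite.coe_toFinset, hA]
    exact K.toAddSubgroup.affineClosed.image_add_left u
  have hbound := kapSum_self_le _ hclosed (by rwa [Set.Finite.coe_toFinset])
  rw [hcard, Nat.cast_pow, Nat.cast_ofNat] at hbound
  obtain ⟨k, rfl⟩ := Nat.exists_eq_add_of_le hmr
  calc Fr (m + k) A ≤ 1 / 4 ^ (m + k) * (3 ^ (m + k) * 2 ^ m) :=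
        mul_le_mul_of_nonneg_left hbound (by positivity)
    _ = (3 / 4 : ℝ) ^ (m + k - m) * (3 / 2 : ℝ) ^ m := by
        simp only [Nat.add_sub_cancel_left, div_pow, show (4 : ℝ) = 2 * 2 by norm_num, mul_pow]
        field_simp
        ring

theorem sum_kap_zero_pair {p : ZMod 2 × ZMod 2} (hp : p ≠ 0) :
    ∑ a ∈ {0, p}, ∑ b ∈ {0, p}, kap a b = 6 := by
  rw [sum_pair hp.symm, sum_pair hp.symm, sum_pair hp.symm]
  norm_num [kap, hp]

theorem Fr_prod_zero_pair {n : ℕ} {p : Fin n → ZMod 2 × ZMod 2} (hp : ∀ j, p j ≠ 0) :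
    Fr n {x | ∀ j, x j = 0 ∨ x j = p j} = (3 / 2 : ℝ) ^ n := by
  have hset : (Set.toFinite {x : V n | ∀ j, x j = 0 ∨ x j = p j}).toFinset =
      Fintype.piFinset fun j => {0, p j} := by
    ext x; simp
  change 1 / 4 ^ n * kapSum _ _ = _
  rw [hset, kapSum_piFinset, prod_congr rfl fun j _ => sum_kap_zero_pair (hp j), prod_const,
    card_univ, Fintype.card_fin]
  field_simp
  norm_num [← mul_pow]

/-- If `A ⊆ V_r` is an affine subspace of dimension `m` on which the
symplectic form vanishes identically, then `F_r(A) ≤ (3/4)^{r−m} (3/2)^m`; moreover for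
`A = {0,p₁} × ⋯ × {0,pₙ}` with every `p_j ≠ 0`, `F_n(A) = (3/2)^n`. -/
theorem affine_isotropic_kernel_bound :
    (∀ (r m : ℕ) (K : Submodule (ZMod 2) (V r)) (u : V r) (A : Set (V r)),
      Module.finrank (ZMod 2) K = m →
      A = (fun k => u + k) '' (K : Set (V r)) →
      (∀ x ∈ A, ∀ y ∈ A, symp x y = 0) →
      Fr r A ≤ (3/4 : ℝ)^(r - m) * (3/2 : ℝ)^m) ∧
    (∀ (n : ℕ) (p : Fin n → ZMod 2 × ZMod 2), (∀ j, p j ≠ 0) →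
      Fr n {x | ∀ j, x j = 0 ∨ x j = p j} = (3/2 : ℝ)^n) :=
  ⟨fun _ _ _ _ _ hm hA hiso => Fr_le_of_isotropic hm hA hiso,
    fun _ _ hp => Fr_prod_zero_pair hp⟩
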